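/- Let X and Y be vector spaces over ℝ and let f : X → Y satisfy: (i) f(0) = 0; (ii) for every line L ⊆ X, the image f '' L is either a point or a line in Y; and (iii) for every line L ⊆ X, if f '' L is a line in Y then the restriction of f to L is injective. Suppose a, b ∈ X are such that f(a) and f(b) are linearly independent in Y. Then for every r ∈ ℝ there exists s ∈ ℝ such that f(r • a) = s • f(a) and f(r • b) = s • f(b). -/

import Mathlib

def IsLine {X : Type*} [AddCommGroup X] [Module ℝ X] (L : Set X) : Prop :=
  ∃ o d : X, d ≠ 0 ∧ L = {x | ∃ r : ℝ, x = r • d + o}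

def IsPoint {X : Type*} (S : Set X) : Prop := ∃ p : X, S = {p}

/-!
If `f x ≠ 0`, the line `ℝ ∙ x` is mapped onto the line through `0` and `f x`, so `f (r • x)` is a
multiple `c • f x`. Write `f (r • a) = g • f a` and `f (r • b) = h • f b`. The lines `ab` and
`(r • a)(r • b)` are mapped onto the lines through `f a, f b` and through `g • f a, h • f b`.
If `g ≠ h`, the first image line contains the point `P = (h - g)⁻¹ • (h • f b - g • f a)`,
whose span is parallel to the second image line. With `P = f x` for some `x` on `ab`, the
point `f (r • x)` lies both on `ℝ ∙ P` and on the second image line, which do not meet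
because `g` and `h` are nonzero.
-/

open Set

section

variable {X Y : Type*} [AddCommGroup X] [Module ℝ X] [AddCommGroup Y] [Module ℝ Y]
  {f : X → Y} {p q x : X}

def lineThrough (p q : X) : Set X := {x | ∃ t : ℝ, x = t • (q - p) + p}

def MapsLinesToLinesOrPoints (f : X → Y) : Prop :=
  ∀ L : Set X, IsLine L → IsPoint (f '' L) ∨ IsLine (f '' L)

def InjOnLinesWithLineImage (f : X → Y) : Prop :=
  ∀ L : Set X, IsLine L → IsLine (f '' L) → InjOn f L

theorem isLine_lineThrough (h : p ≠ q) : IsLine (lineThrough p q) :=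
  ⟨p, q - p, sub_ne_zero.2 h.symm, rfl⟩

theorem left_mem_lineThrough : p ∈ lineThrough p q := ⟨0, by module⟩

theorem right_mem_lineThrough : q ∈ lineThrough p q := ⟨1, by module⟩

theorem smul_mem_lineThrough (r : ℝ) (hx : x ∈ lineThrough p q) :
    r • x ∈ lineThrough (r • p) (r • q) := by
  obtain ⟨t, rfl⟩ := hx
  exact ⟨t, by module⟩

theorem IsLine.eq_lineThrough {L : Set X} (hL : IsLine L) (hp : p ∈ L) (hq : q ∈ L)
    (hpq : p ≠ q) : L = lineThrough p q := by
  obtain ⟨o, d, -, rfl⟩ := hL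
  obtain ⟨r₀, rfl⟩ := hp
  obtain ⟨r₁, rfl⟩ := hq
  have hr : r₁ - r₀ ≠ 0 := fun h => hpq (by rw [sub_eq_zero.mp h])
  ext x
  constructor
  · rintro ⟨s, rfl⟩
    exact ⟨(s - r₀) / (r₁ - r₀), by match_scalars <;> field_simp <;> ring⟩
  · rintro ⟨t, rfl⟩
    exact ⟨r₀ + t * (r₁ - r₀), by module⟩

theorem MapsLinesToLinesOrPoints.image_lineThrough (hf : MapsLinesToLinesOrPoints f)
    (hpq : f p ≠ f q) : f '' lineThrough p q = lineThrough (f p) (f q) := by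
  have hp : f p ∈ f '' lineThrough p q := mem_image_of_mem f left_mem_lineThrough
  have hq : f q ∈ f '' lineThrough p q := mem_image_of_mem f right_mem_lineThrough
  refine ((hf _ (isLine_lineThrough ?_)).resolve_left ?_).eq_lineThrough hp hq hpq
  · rintro rfl
    exact hpq rfl
  · rintro ⟨y, hy⟩
    rw [hy] at hp hq
    exact hpq (hp.trans hq.symm)

theorem injOn_lineThrough (hf : MapsLinesToLinesOrPoints f) (hf' : InjOnLinesWithLineImage f)
    (hpq : f p ≠ f q) : InjOn f (lineThrough p q) := by
  refine hf' _ (isLine_lineThrough fun h => hpq (h ▸ rfl)) ?_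
  rw [hf.image_lineThrough hpq]
  exact isLine_lineThrough hpq

theorem exists_map_smul_eq_smul (h0 : f 0 = 0) (hf : MapsLinesToLinesOrPoints f)
    (hx : f x ≠ 0) (r : ℝ) : ∃ c : ℝ, f (r • x) = c • f x := by
  have hr : f (r • x) ∈ f '' lineThrough 0 x := mem_image_of_mem f ⟨r, by module⟩
  rw [hf.image_lineThrough (h0 ▸ hx.symm), h0] at hr
  obtain ⟨c, hc⟩ := hr
  exact ⟨c, by rw [hc]; module⟩

theorem eq_zero_of_map_smul_eq_zero (h0 : f 0 = 0) (hf : MapsLinesToLinesOrPoints f)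
    (hf' : InjOnLinesWithLineImage f) (hx : f x ≠ 0) {r : ℝ} (hr : f (r • x) = 0) : r = 0 := by
  have hrx : r • x = 0 :=
    injOn_lineThrough hf hf' (h0 ▸ hx.symm) ⟨r, by module⟩ left_mem_lineThrough (hr.trans h0.symm)
  exact (smul_eq_zero.mp hrx).resolve_right fun h => hx (h ▸ h0)

theorem eq_of_map_smul_eq_smul (h0 : f 0 = 0) (hf : MapsLinesToLinesOrPoints f) {a b : X}
    (hind : ∀ r s : ℝ, r • f a + s • f b = 0 → r = 0 ∧ s = 0) {r g h : ℝ}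
    (hg : f (r • a) = g • f a) (hh : f (r • b) = h • f b) (hg0 : g ≠ 0) (hh0 : h ≠ 0) :
    g = h := by
  by_contra hgh
  have hhg : h - g ≠ 0 := sub_ne_zero.2 (Ne.symm hgh)
  have hab : f a ≠ f b := fun he => one_ne_zero (hind 1 (-1) (by rw [he]; module)).1
  have hrab : f (r • a) ≠ f (r • b) := by
    rw [hg, hh]
    exact fun he => hg0 (hind g (-h) (by rw [neg_smul, he]; module)).1
  set P := (h - g)⁻¹ • (h • f b - g • f a) with hP
  obtain ⟨x, hx, hxP⟩ : P ∈ f '' lineThrough a b := by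
    rw [hf.image_lineThrough hab]
    exact ⟨h / (h - g), by rw [hP]; match_scalars <;> field_simp; ring⟩
  have hP0 : P ≠ 0 := fun hP0 => mul_ne_zero (inv_ne_zero hhg) hh0
    (hind ((h - g)⁻¹ * -g) ((h - g)⁻¹ * h) (by rw [← hP0, hP]; module)).2
  obtain ⟨c, hc⟩ := exists_map_smul_eq_smul h0 hf (hxP ▸ hP0) r
  obtain ⟨t, ht⟩ : f (r • x) ∈ lineThrough (f (r • a)) (f (r • b)) := by
    rw [← hf.image_lineThrough hrab]
    exact mem_image_of_mem f (smul_mem_lineThrough r hx)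
  rw [hc, hxP, hg, hh, hP] at ht
  -- `ht` says that `g • f a` is a multiple of `h • f b - g • f a`
  set k := c * (h - g)⁻¹ - t
  obtain ⟨hkg, hkh⟩ := hind (-(k * g) - g) (k * h) (by linear_combination (norm := module) ht)
  have hk : k = 0 := (mul_eq_zero.mp hkh).resolve_right hh0
  exact hg0 (by linear_combination -hkg - g * hk)

end

theorem common_scaling_factor
    {X Y : Type*} [AddCommGroup X] [Module ℝ X] [AddCommGroup Y] [Module ℝ Y]
    (f : X → Y) (h0 : f 0 = 0)
    (h1 : ∀ L : Set X, IsLine L → IsPoint (f '' L) ∨ IsLine (f '' L))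
    (h2 : ∀ L : Set X, IsLine L → IsLine (f '' L) → Set.InjOn f L)
    (a b : X)
    (hind : ∀ r s : ℝ, r • f a + s • f b = 0 → r = 0 ∧ s = 0) :
    ∀ r : ℝ, ∃ s : ℝ, f (r • a) = s • f a ∧ f (r • b) = s • f b := by
  intro r
  rcases eq_or_ne r 0 with rfl | hr
  · exact ⟨0, by simp [h0]⟩
  have hfa : f a ≠ 0 := fun he => one_ne_zero (hind 1 0 (by simp [he])).1
  have hfb : f b ≠ 0 := fun he => one_ne_zero (hind 0 1 (by simp [he])).2
  obtain ⟨g, hg⟩ := exists_map_smul_eq_smul h0 h1 hfa r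
  obtain ⟨h, hh⟩ := exists_map_smul_eq_smul h0 h1 hfb r
  have hg0 : g ≠ 0 := fun he => hr (eq_zero_of_map_smul_eq_zero h0 h1 h2 hfa (by simp [hg, he]))
  have hh0 : h ≠ 0 := fun he => hr (eq_zero_of_map_smul_eq_zero h0 h1 h2 hfb (by simp [hh, he]))
  refine ⟨g, hg, ?_⟩
  rw [hh, eq_of_map_smul_eq_smul h0 h1 hind hg hh hg0 hh0]
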